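/- In the symmetric-channel mode-pairing scheme with click probability p ≈ η_s μ and unbounded pairing interval (l → ∞), the pairing rate scales as O(√η): r_p = p/2 = η_s μ / 2 where η = η_s², so r_p = (μ/2)√η. -/

import Mathlib

open Filter Topology

noncomputable def pairingRate (p : ℝ) (l : ℕ) : ℝ :=
  (1 / (p * (1 - (1 - p) ^ l)) + 1 / p)⁻¹

theorem tendsto_pairingRate_atTop {p : ℝ} (hp0 : 0 < p) (hp2 : p < 2) :
    Tendsto (pairingRate p) atTop (𝓝 (p / 2)) := by
  unfold pairingRate
  have hpow : Tendsto (fun l : ℕ => (1 - p) ^ l) atTop (𝓝 0) :=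
    tendsto_pow_atTop_nhds_zero_of_abs_lt_one (abs_lt.mpr ⟨by linarith, by linarith⟩)
  have hinv : Tendsto (fun l : ℕ => 1 / (p * (1 - (1 - p) ^ l)) + 1 / p) atTop
      (𝓝 (1 / (p * (1 - 0)) + 1 / p)) :=
    (tendsto_const_nhds.div ((tendsto_const_nhds.sub hpow).const_mul p)
      (by simp [hp0.ne'])).add tendsto_const_nhds
  have hlim : 1 / (p * (1 - 0)) + 1 / p = (p / 2)⁻¹ := by field_simp; ring
  rw [hlim] at hinv
  simpa only [inv_inv] using hinv.inv₀ (inv_pos.mpr (half_pos hp0)).ne'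

theorem pairing_rate_sqrt_eta_scaling_general (η ηs μ p : ℝ)
    (hη : 0 < η) (hμ : 0 < μ)
    (hηs : ηs = Real.sqrt η) (hp : p = ηs * μ) (hp1 : p < 1) :
    Tendsto (fun l : ℕ => (1 / (p * (1 - (1 - p) ^ l)) + 1 / p)⁻¹)
      atTop (𝓝 ((μ / 2) * Real.sqrt η)) := by
  have hp0 : 0 < p := by rw [hp, hηs]; positivity
  have hlim : (μ / 2) * Real.sqrt η = p / 2 := by rw [hp, hηs]; ring
  rw [hlim]
  exact tendsto_pairingRate_atTop hp0 (by linarith)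

/-- With a symmetric channel (`η = η_s²`, i.e. `η_s = √η`), click probability
`p = η_s μ` and unbounded pairing interval `l → ∞`, the pairing rate
`r_p(p,l) = (1/(p(1-(1-p)^l)) + 1/p)⁻¹` converges to `p/2 = (μ/2)√η`,
i.e. it scales as `O(√η)`. -/
theorem pairing_rate_sqrt_eta_scaling (η ηs μ p : ℝ)
    (hη : 0 < η) (hη1 : η ≤ 1) (hμ : 0 < μ)
    (hηs : ηs = Real.sqrt η) (hp : p = ηs * μ) (hp1 : p < 1) :
    Tendsto (fun l : ℕ => (1 / (p * (1 - (1 - p) ^ l)) + 1 / p)⁻¹)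
      atTop (𝓝 ((μ / 2) * Real.sqrt η)) :=
  pairing_rate_sqrt_eta_scaling_general η ηs μ p hη hμ hηs hp hp1
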